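/- Let c > 0, π̂ ∈ (0,1), and let π* and f be as in the explicit solution (f(x) = 2c(1-2x)log(x/(1-x)) + Āx + B̄ on [π̂,π*], f(x)=1-x on [π*,1], with f'(π̂)=0, f'(π*)=-1, f(π*)=1-π*). Then f is nonincreasing on [π̂,1] and 0 ≤ f(x) ≤ 1 for all x ∈ [π̂,1]. -/

import Mathlib

/-! The smooth piece `F = Ψ + A x + B` is concave on `(0, 1)`: for `c > 0` the derivative
`Ψ' x = -4c log (x / (1 - x)) + 2c (1/x - 1/(1 - x))` is decreasing there.
Since `F' π̂ = 0` and `F' π* = -1`, on `[π̂, π*]` the function `F` is nonincreasing and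
`F x + x` is nondecreasing, whence `F x ≤ F π* + π* - x = 1 - x`. At `π*` the piece `F` meets
the line `1 - x`, which decreases to `0` at `1`. -/

open Set Real

namespace QuickestSearch

noncomputable def psi (c x : ℝ) : ℝ := 2 * c * (1 - 2 * x) * log (x / (1 - x))

noncomputable def psiDeriv (c x : ℝ) : ℝ :=
  -4 * c * log (x / (1 - x)) + 2 * c * (1 / x - 1 / (1 - x))

theorem hasDerivAt_psi (c : ℝ) {x : ℝ} (hx₀ : 0 < x) (hx₁ : x < 1) :
    HasDerivAt (psi c) (psiDeriv c x) x := by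
  have h1x : (1 : ℝ) - x ≠ 0 := by linarith
  have hratio : HasDerivAt (fun t => t / (1 - t)) (1 / (1 - x) ^ 2) x :=
    ((hasDerivAt_id' x).fun_div ((hasDerivAt_id' x).const_sub 1) h1x).congr_deriv (by ring)
  have hlog := hratio.log (div_pos hx₀ (by linarith)).ne'
  have hlin : HasDerivAt (fun t => 2 * c * (1 - 2 * t)) (-4 * c) x :=
    ((((hasDerivAt_id' x).const_mul 2).const_sub 1).const_mul (2 * c)).congr_deriv (by ring)
  refine (hlin.fun_mul hlog).congr_deriv ?_
  unfold psiDeriv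
  field_simp
  ring

theorem antitoneOn_psiDeriv {c : ℝ} (hc : 0 ≤ c) : AntitoneOn (psiDeriv c) (Ioo 0 1) := by
  rintro x ⟨hx₀, hx₁⟩ y ⟨hy₀, hy₁⟩ hxy
  have hlog : log (x / (1 - x)) ≤ log (y / (1 - y)) :=
    log_le_log (div_pos hx₀ (by linarith)) (div_le_div₀ hy₀.le hxy (by linarith) (by linarith))
  have hinv : 1 / y - 1 / (1 - y) ≤ 1 / x - 1 / (1 - x) :=
    sub_le_sub (one_div_le_one_div_of_le hx₀ hxy)
      (one_div_le_one_div_of_le (by linarith) (by linarith))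
  unfold psiDeriv
  linarith [mul_le_mul_of_nonneg_left hlog hc, mul_le_mul_of_nonneg_left hinv hc]

section SlopeBounds

variable {F F' : ℝ → ℝ} {a b k : ℝ}

theorem hasDerivAt_sub_mul {x : ℝ} (hF : HasDerivAt F (F' x) x) :
    HasDerivAt (fun y => F y - k * y) (F' x - k) x :=
  (hF.fun_sub ((hasDerivAt_id' x).const_mul k)).congr_deriv (by ring)

theorem antitoneOn_sub_mul_of_deriv_le (hF : ∀ x ∈ Icc a b, HasDerivAt F (F' x) x)
    (hk : ∀ x ∈ Ioo a b, F' x ≤ k) : AntitoneOn (fun x => F x - k * x) (Icc a b) := by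
  refine antitoneOn_of_hasDerivWithinAt_nonpos (f' := fun x => F' x - k) (convex_Icc a b)
    (fun x hx => (hasDerivAt_sub_mul (hF x hx)).continuousAt.continuousWithinAt) ?_ ?_
  all_goals rw [interior_Icc]; intro x hx
  · exact (hasDerivAt_sub_mul (hF x (Ioo_subset_Icc_self hx))).hasDerivWithinAt
  · exact sub_nonpos.2 (hk x hx)

theorem monotoneOn_sub_mul_of_le_deriv (hF : ∀ x ∈ Icc a b, HasDerivAt F (F' x) x)
    (hk : ∀ x ∈ Ioo a b, k ≤ F' x) : MonotoneOn (fun x => F x - k * x) (Icc a b) := by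
  refine monotoneOn_of_hasDerivWithinAt_nonneg (f' := fun x => F' x - k) (convex_Icc a b)
    (fun x hx => (hasDerivAt_sub_mul (hF x hx)).continuousAt.continuousWithinAt) ?_ ?_
  all_goals rw [interior_Icc]; intro x hx
  · exact (hasDerivAt_sub_mul (hF x (Ioo_subset_Icc_self hx))).hasDerivWithinAt
  · exact sub_nonneg.2 (hk x hx)

end SlopeBounds

section Glue

variable {F f : ℝ → ℝ} {a b : ℝ}

theorem eqOn_one_sub_of_glue (hFb : F b = 1 - b) (hf : ∀ x, f x = if x ≤ b then F x else 1 - x) :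
    EqOn f (fun x => 1 - x) (Icc b 1) := by
  rintro x ⟨hbx, -⟩
  rw [hf x]
  split_ifs with hxb
  · rw [le_antisymm hxb hbx, hFb]
  · rfl

theorem antitoneOn_of_glue (hab : a ≤ b) (hb : b ≤ 1) (hF : AntitoneOn F (Icc a b))
    (hFb : F b = 1 - b) (hf : ∀ x, f x = if x ≤ b then F x else 1 - x) :
    AntitoneOn f (Icc a 1) := by
  have hleft : AntitoneOn f (Icc a b) :=
    hF.congr fun x hx => (if_pos hx.2 ▸ hf x).symm
  have hright : AntitoneOn f (Icc b 1) :=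
    AntitoneOn.congr (fun _ _ _ _ hxy => by linarith)
      (eqOn_one_sub_of_glue hFb hf).symm
  rw [← Icc_union_Icc_eq_Icc hab hb]
  exact hleft.union_right hright (isGreatest_Icc hab) (isLeast_Icc hb)

theorem le_one_of_glue (ha : 0 < a) (hFid : MonotoneOn (fun x => F x + x) (Icc a b))
    (hFb : F b = 1 - b) (hf : ∀ x, f x = if x ≤ b then F x else 1 - x) {x : ℝ}
    (hx : x ∈ Icc a 1) : f x ≤ 1 := by
  rw [hf x]
  split_ifs with hxb
  · have := hFid ⟨hx.1, hxb⟩ ⟨hx.1.trans hxb, le_rfl⟩ hxb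
    dsimp only at this
    linarith [hx.1]
  · linarith [hx.1]

end Glue

end QuickestSearch

open QuickestSearch

theorem stmt18 (c πh πs A B : ℝ) (hc : 0 < c)
    (h1 : 0 < πh) (h2 : πh < πs) (h3 : πs < 1)
    (Ψ : ℝ → ℝ) (hΨ : ∀ x, Ψ x = 2*c*(1-2*x)*Real.log (x/(1-x)))
    (hA : A = -deriv Ψ πh)
    (hslope : deriv Ψ πs + A = -1)
    (hB : Ψ πs + A*πs + B = 1 - πs)
    (f : ℝ → ℝ)
    (hf : ∀ x, f x = if x ≤ πs then Ψ x + A*x + B else 1 - x) :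
    AntitoneOn f (Set.Icc πh 1) ∧
    ∀ x ∈ Set.Icc πh 1, 0 ≤ f x ∧ f x ≤ 1 := by
  obtain rfl : Ψ = psi c := funext hΨ
  have hsub : Icc πh πs ⊆ Ioo 0 1 := Icc_subset_Ioo h1 h3
  have hderiv : ∀ x ∈ Icc πh πs, HasDerivAt (fun x => psi c x + A * x + B) (psiDeriv c x + A) x :=
    fun x hx => (((hasDerivAt_psi c (hsub hx).1 (hsub hx).2).add
      ((hasDerivAt_id' x).const_mul A)).add_const B).congr_deriv (by ring)
  have hslope_left : psiDeriv c πh + A = 0 := by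
    rw [hA, (hasDerivAt_psi c h1 (h2.trans h3)).deriv, add_neg_cancel]
  rw [(hasDerivAt_psi c (h1.trans h2) h3).deriv] at hslope
  have hdecr : ∀ {x y}, x ∈ Icc πh πs → y ∈ Icc πh πs → x ≤ y → psiDeriv c y ≤ psiDeriv c x :=
    fun hx hy hxy => antitoneOn_psiDeriv hc.le (hsub hx) (hsub hy) hxy
  have hF : AntitoneOn (fun x => psi c x + A * x + B) (Icc πh πs) := by
    simpa using antitoneOn_sub_mul_of_deriv_le (k := 0) hderiv fun x hx => by
      linarith [hdecr (left_mem_Icc.2 h2.le) (Ioo_subset_Icc_self hx) hx.1.le]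
  have hFid : MonotoneOn (fun x => psi c x + A * x + B + x) (Icc πh πs) := by
    simpa using monotoneOn_sub_mul_of_le_deriv (k := -1) hderiv fun x hx => by
      linarith [hdecr (Ioo_subset_Icc_self hx) (right_mem_Icc.2 h2.le) hx.2.le]
  have hant := antitoneOn_of_glue h2.le h3.le hF hB hf
  refine ⟨hant, fun x hx => ⟨?_, le_one_of_glue h1 hFid hB hf hx⟩⟩
  have hf1 : f 1 = 0 := (eqOn_one_sub_of_glue hB hf ⟨h3.le, le_rfl⟩).trans (sub_self 1)
  exact hf1 ▸ hant hx (right_mem_Icc.2 (h2.trans h3).le) hx.2
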